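/- arXiv:1703.10868 — 10 statements merged into one kernel-verified Lean document; each statement's English description precedes it below -/
import Mathlib

section
/- Let 0 < γ ≤ 1 and let K ⊂ ℝ^d be a convex body in γ-canonical form. Let h be a supporting hyperplane of K, and let p be any point of K whose Euclidean distance to h is at most w, where w ≤ γ/4. Then the ray emanating from O through p intersects h in a unique point p′, and ‖p − p′‖ ≤ 2w/γ. -/
open scoped RealInnerProductSpace

/-- Let `0 < γ ≤ 1` and let `K ⊆ ℝ^d` be a convex body in γ-canonical form.
Let `h = {z | ⟪v,z⟫ = c}` (with unit normal `v`) be a supporting hyperplane of `K`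
(it meets `K` and `K` lies in the halfspace `⟪v,·⟫ ≤ c`). Let `p ∈ K` be at distance
at most `w` from `h` (i.e. `c - ⟪v,p⟫ ≤ w`), where `w ≤ γ/4`. Then the ray from the
origin through `p` intersects `h` in a unique point `p'`, and `‖p - p'‖ ≤ 2w/γ`. -/
theorem stmt1 {d : ℕ} (γ : ℝ) (hγ0 : 0 < γ) (hγ1 : γ ≤ 1)
    (K : Set (EuclideanSpace ℝ (Fin d)))
    (hK : Convex ℝ K) (hKc : IsCompact K) (hKi : (interior K).Nonempty)
    (hcan₁ : Metric.closedBall (0 : EuclideanSpace ℝ (Fin d)) (γ / 2) ⊆ K)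
    (hcan₂ : K ⊆ Metric.closedBall (0 : EuclideanSpace ℝ (Fin d)) (1 / 2))
    (v : EuclideanSpace ℝ (Fin d)) (hv : ‖v‖ = 1) (c : ℝ)
    (hsupp : ∀ z ∈ K, ⟪v, z⟫ ≤ c) (htouch : ∃ z ∈ K, ⟪v, z⟫ = c)
    (w : ℝ) (hw : w ≤ γ / 4)
    (p : EuclideanSpace ℝ (Fin d)) (hpK : p ∈ K) (hpw : c - ⟪v, p⟫ ≤ w) :
    ∃ p' : EuclideanSpace ℝ (Fin d),
      ((∃ t : ℝ, 0 ≤ t ∧ p' = t • p) ∧ ⟪v, p'⟫ = c) ∧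
      (∀ q : EuclideanSpace ℝ (Fin d),
        ((∃ t : ℝ, 0 ≤ t ∧ q = t • p) ∧ ⟪v, q⟫ = c) → q = p') ∧
      ‖p - p'‖ ≤ 2 * w / γ := by
  have hc : γ / 2 ≤ c := by
    have hmem : (γ / 2) • v ∈ K := by
      apply hcan₁
      have : ‖(γ / 2) • v‖ = γ / 2 := by
        rw [norm_smul, hv, mul_one, Real.norm_eq_abs, abs_of_pos (by positivity)]
      simp [Metric.mem_closedBall, dist_eq_norm, this]
    have := hsupp _ hmem
    rw [real_inner_smul_right, real_inner_self_eq_norm_sq, hv] at this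
    nlinarith [this]
  have hvp : γ / 4 ≤ ⟪v, p⟫ := by nlinarith
  have hvp0 : 0 < ⟪v, p⟫ := by linarith
  have hpc : ⟪v, p⟫ ≤ c := hsupp p hpK
  have hpnorm : ‖p‖ ≤ 1 / 2 := by
    have := hcan₂ hpK
    simpa [Metric.mem_closedBall, dist_eq_norm] using this
  set t : ℝ := c / ⟪v, p⟫ with ht
  have ht1 : 1 ≤ t := (one_le_div hvp0).mpr hpc
  have ht0 : 0 ≤ t := by linarith
  refine ⟨t • p, ⟨⟨t, ht0, rfl⟩, ?_⟩, ?_, ?_⟩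
  · rw [real_inner_smul_right, ht, div_mul_cancel₀ _ (ne_of_gt hvp0)]
  · rintro q ⟨⟨s, hs0, rfl⟩, hq⟩
    rw [real_inner_smul_right] at hq
    have : s = t := by
      rw [ht, eq_div_iff (ne_of_gt hvp0)]
      exact hq
    rw [this]
  · have hw0 : 0 ≤ w := by linarith
    have : p - t • p = (1 - t) • p := by rw [sub_smul, one_smul]
    rw [this, norm_smul, Real.norm_eq_abs, abs_of_nonpos (by linarith : 1 - t ≤ 0)]
    have h1 : -(1 - t) = (c - ⟪v, p⟫) / ⟪v, p⟫ := by
      rw [neg_sub, ht, sub_div, div_self hvp0.ne']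
    rw [h1]
    have h2 : (c - ⟪v, p⟫) / ⟪v, p⟫ ≤ w / (γ / 4) := by
      apply div_le_div₀ (by positivity) (by linarith) (by positivity) hvp
    calc (c - ⟪v, p⟫) / ⟪v, p⟫ * ‖p‖ ≤ (w / (γ / 4)) * (1/2) := by
          apply mul_le_mul h2 hpnorm (norm_nonneg _) (by positivity)
      _ = 2 * w / γ := by field_simp; ring
end

section
/- Let 0 < γ ≤ 1 and let K ⊂ ℝ^d be a convex body in γ-canonical form. Let p be any point on the boundary ∂K, let h be a supporting hyperplane of K at p, and let w > 0. Let h′ be the hyperplane obtained by translating h by distance w in the direction of the outward normal (away from K). Then the ray emanating from O through p intersects h′ in a unique point p′, and ‖p − p′‖ ≤ w/γ. -/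
open scoped RealInnerProductSpace

/-!
The ray through `p` is `t ↦ t • p`, and `⟪v, t • p⟫ = t ⟪v, p⟫`, so it meets the translated
hyperplane exactly at `t = 1 + w / ⟪v, p⟫`, at distance `(w / ⟪v, p⟫) ‖p‖` from `p`. Since `K`
contains the ball of radius `γ / 2`, it contains `(γ / 2) • v`, so `⟪v, p⟫ ≥ γ / 2`; since `K` lies
in the ball of radius `1 / 2`, so does `p ∈ closure K`. Hence the distance is at most `w / γ`.
-/

section RayHyperplane

variable {E : Type*} [NormedAddCommGroup E] [InnerProductSpace ℝ E]

theorem le_of_closedBall_subset_of_inner_le {K : Set E} {r a : ℝ} (hr : 0 ≤ r)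
    (hball : Metric.closedBall (0 : E) r ⊆ K) {v : E} (hv : ‖v‖ = 1)
    (hsupp : ∀ z ∈ K, ⟪v, z⟫ ≤ a) : r ≤ a := by
  have hmem : r • v ∈ K := hball (by simp [norm_smul, hv, abs_of_nonneg hr])
  simpa [real_inner_smul_right, real_inner_self_eq_norm_sq, hv] using hsupp _ hmem

theorem mem_ray_inter_hyperplane_iff {p v q : E} {w : ℝ} (hc : 0 < ⟪v, p⟫)
    (hcw : 0 ≤ ⟪v, p⟫ + w) :
    ((∃ t : ℝ, 0 ≤ t ∧ q = t • p) ∧ ⟪v, q⟫ = ⟪v, p⟫ + w) ↔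
      q = ((⟪v, p⟫ + w) / ⟪v, p⟫) • p := by
  constructor
  · rintro ⟨⟨t, -, rfl⟩, hq⟩
    rw [real_inner_smul_right] at hq
    rw [← hq, mul_div_cancel_right₀ _ hc.ne']
  · rintro rfl
    refine ⟨⟨_, div_nonneg hcw hc.le, rfl⟩, ?_⟩
    rw [real_inner_smul_right, div_mul_cancel₀ _ hc.ne']

theorem norm_sub_ray_inter_hyperplane {p v : E} {w : ℝ} (hc : 0 < ⟪v, p⟫) (hw : 0 ≤ w) :
    ‖p - ((⟪v, p⟫ + w) / ⟪v, p⟫) • p‖ = w / ⟪v, p⟫ * ‖p‖ := by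
  have hcoef : 1 - (⟪v, p⟫ + w) / ⟪v, p⟫ = -(w / ⟪v, p⟫) := by
    field_simp
    ring
  have hsub : p - ((⟪v, p⟫ + w) / ⟪v, p⟫) • p = -(w / ⟪v, p⟫) • p := by
    rw [← hcoef, sub_smul, one_smul]
  rw [hsub, norm_smul, norm_neg, Real.norm_of_nonneg (by positivity)]

end RayHyperplane

theorem stmt2_general {d : ℕ} (γ : ℝ) (hγ0 : 0 < γ)
    (K : Set (EuclideanSpace ℝ (Fin d)))
    (hcan₁ : Metric.closedBall (0 : EuclideanSpace ℝ (Fin d)) (γ / 2) ⊆ K)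
    (hcan₂ : K ⊆ Metric.closedBall (0 : EuclideanSpace ℝ (Fin d)) (1 / 2))
    (p : EuclideanSpace ℝ (Fin d)) (hp : p ∈ frontier K)
    (v : EuclideanSpace ℝ (Fin d)) (hv : ‖v‖ = 1)
    (hsupp : ∀ z ∈ K, ⟪v, z⟫ ≤ ⟪v, p⟫)
    (w : ℝ) (hw : 0 < w) :
    ∃ p' : EuclideanSpace ℝ (Fin d),
      ((∃ t : ℝ, 0 ≤ t ∧ p' = t • p) ∧ ⟪v, p'⟫ = ⟪v, p⟫ + w) ∧
      (∀ q : EuclideanSpace ℝ (Fin d),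
        ((∃ t : ℝ, 0 ≤ t ∧ q = t • p) ∧ ⟪v, q⟫ = ⟪v, p⟫ + w) → q = p') ∧
      ‖p - p'‖ ≤ w / γ := by
  have hγc : γ / 2 ≤ ⟪v, p⟫ := le_of_closedBall_subset_of_inner_le (by positivity) hcan₁ hv hsupp
  have hc : 0 < ⟪v, p⟫ := by linarith
  have hp_norm : ‖p‖ ≤ 1 / 2 := by
    have hp_ball := closure_minimal hcan₂ Metric.isClosed_closedBall (frontier_subset_closure hp)
    simpa using hp_ball
  have hray := fun q ↦ mem_ray_inter_hyperplane_iff (q := q) hc (by linarith : 0 ≤ ⟪v, p⟫ + w)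
  refine ⟨_, (hray _).2 rfl, fun q hq ↦ (hray q).1 hq, ?_⟩
  calc ‖p - ((⟪v, p⟫ + w) / ⟪v, p⟫) • p‖ = w / ⟪v, p⟫ * ‖p‖ :=
        norm_sub_ray_inter_hyperplane hc hw.le
    _ ≤ w / (γ / 2) * (1 / 2) := by gcongr
    _ = w / γ := by field_simp

/-- Let `0 < γ ≤ 1` and let `K ⊆ ℝ^d` be a convex body in γ-canonical form.
Let `p ∈ ∂K`, let `h` be a supporting hyperplane of `K` at `p` with outward unit normal `v`
(so `K ⊆ {z | ⟪v,z⟫ ≤ ⟪v,p⟫}`), and let `w > 0`. Let `h'` be the translate of `h` by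
distance `w` in direction `v`, i.e. `h' = {z | ⟪v,z⟫ = ⟪v,p⟫ + w}`. Then the ray from the
origin through `p` intersects `h'` in a unique point `p'`, and `‖p - p'‖ ≤ w/γ`. -/
theorem stmt2 {d : ℕ} (γ : ℝ) (hγ0 : 0 < γ) (hγ1 : γ ≤ 1)
    (K : Set (EuclideanSpace ℝ (Fin d)))
    (hK : Convex ℝ K) (hKc : IsCompact K) (hKi : (interior K).Nonempty)
    (hcan₁ : Metric.closedBall (0 : EuclideanSpace ℝ (Fin d)) (γ / 2) ⊆ K)
    (hcan₂ : K ⊆ Metric.closedBall (0 : EuclideanSpace ℝ (Fin d)) (1 / 2))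
    (p : EuclideanSpace ℝ (Fin d)) (hp : p ∈ frontier K)
    (v : EuclideanSpace ℝ (Fin d)) (hv : ‖v‖ = 1)
    (hsupp : ∀ z ∈ K, ⟪v, z⟫ ≤ ⟪v, p⟫)
    (w : ℝ) (hw : 0 < w) :
    ∃ p' : EuclideanSpace ℝ (Fin d),
      ((∃ t : ℝ, 0 ≤ t ∧ p' = t • p) ∧ ⟪v, p'⟫ = ⟪v, p⟫ + w) ∧
      (∀ q : EuclideanSpace ℝ (Fin d),
        ((∃ t : ℝ, 0 ≤ t ∧ q = t • p) ∧ ⟪v, q⟫ = ⟪v, p⟫ + w) → q = p') ∧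
      ‖p - p'‖ ≤ w / γ :=
  stmt2_general γ hγ0 K hcan₁ hcan₂ p hp v hv hsupp w hw
end

section
/- Let λ ≥ 1. Let A and B be convex bodies in ℝ^d that are centrally symmetric about points a and b respectively (i.e., A = 2a − A and B = 2b − B), and suppose A ⊆ B. Then A^λ ⊆ B^λ, where A^λ = a + λ(A − a) and B^λ = b + λ(B − b) denote the bodies scaled by factor λ about their respective centers. -/
/-- Let `λ ≥ 1`. Let `A` and `B` be convex bodies in `ℝ^d`, centrally
symmetric about points `a` and `b` respectively (i.e. `A = 2a − A` and `B = 2b − B`),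
with `A ⊆ B`. Then `A^λ ⊆ B^λ`, where `A^λ = a + λ(A − a)` and `B^λ = b + λ(B − b)`
are the scalings of `A` and `B` by factor `λ` about their respective centers. -/
theorem stmt3 {d : ℕ} (lam : ℝ) (hlam : 1 ≤ lam)
    (A B : Set (EuclideanSpace ℝ (Fin d))) (a b : EuclideanSpace ℝ (Fin d))
    (hA : Convex ℝ A) (hAc : IsCompact A) (hAi : (interior A).Nonempty)
    (hB : Convex ℝ B) (hBc : IsCompact B) (hBi : (interior B).Nonempty)
    (hsymA : ∀ z, z ∈ A ↔ (2 : ℝ) • a - z ∈ A)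
    (hsymB : ∀ z, z ∈ B ↔ (2 : ℝ) • b - z ∈ B)
    (hAB : A ⊆ B) :
    (fun z => a + lam • (z - a)) '' A ⊆ (fun z => b + lam • (z - b)) '' B := by
  rintro _ ⟨x, hx, rfl⟩
  have hlam0 : (0:ℝ) < lam := lt_of_lt_of_le one_pos hlam
  set μ : ℝ := (1 - 1/lam)/2 with hμ
  have hinv : 1/lam ≤ 1 := by rw [div_le_one hlam0]; exact hlam
  have hμ0 : 0 ≤ μ := by simp only [hμ]; linarith
  have hμ1 : μ ≤ 1 := by simp only [hμ]; nlinarith [one_div_pos.mpr hlam0]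
  -- x + 2(b-a) ∈ B
  have hx2 : x + (2:ℝ) • (b - a) ∈ B := by
    have h1 : (2:ℝ) • a - x ∈ B := hAB ((hsymA x).mp hx)
    have h2 : (2:ℝ) • b - ((2:ℝ) • a - x) ∈ B := (hsymB _).mp h1
    have : (2:ℝ) • b - ((2:ℝ) • a - x) = x + (2:ℝ) • (b - a) := by
      simp [smul_sub]; abel
    rwa [this] at h2
  have hy : (1 - μ) • x + μ • (x + (2:ℝ) • (b - a)) ∈ B :=
    hB (hAB hx) hx2 (by linarith) hμ0 (by ring)
  refine ⟨(1 - μ) • x + μ • (x + (2:ℝ) • (b - a)), hy, ?_⟩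
  simp only [hμ]
  match_scalars <;> field_simp <;> ring
end

section
/- Let K ⊂ ℝ^d be a convex body and let 0 < λ ≤ 1/5. If x, y ∈ K are such that M^λ(x) ∩ M^λ(y) ≠ ∅, then M^λ(y) ⊆ M^{4λ}(x). -/
/-- The Macbeath region `M^λ(x) = x + λ((K − x) ∩ (x − K))` of a convex body `K ⊆ ℝ^d`
at a point `x`, with scaling factor `λ`. -/
def Mreg {d : ℕ} (K : Set (EuclideanSpace ℝ (Fin d))) (x : EuclideanSpace ℝ (Fin d))
    (l : ℝ) : Set (EuclideanSpace ℝ (Fin d)) :=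
  {z | ∃ y, x + y ∈ K ∧ x - y ∈ K ∧ z = x + l • y}

private lemma combo4 {E : Type*} [AddCommGroup E] [Module ℝ E] {K : Set E} (hK : Convex ℝ K)
    {p q r s : E} (hp : p ∈ K) (hq : q ∈ K) (hr : r ∈ K) (hs : s ∈ K)
    {a b c e : ℝ} (ha : 0 ≤ a) (hb : 0 ≤ b) (hc : 0 ≤ c) (he : 0 ≤ e)
    (hsum : a + b + c + e = 1) : a • p + b • q + c • r + e • s ∈ K := by
  have := hK.sum_mem (t := (Finset.univ : Finset (Fin 4))) (w := ![a, b, c, e])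
    (z := ![p, q, r, s]) (by intro i _; fin_cases i <;> assumption)
    (by simp [Fin.sum_univ_four, hsum]) (by intro i _; fin_cases i <;> assumption)
  simpa [Fin.sum_univ_four, add_assoc] using this

/-- Let `K ⊆ ℝ^d` be a convex body and let `0 < λ ≤ 1/5`.
If `x, y ∈ K` are such that `M^λ(x) ∩ M^λ(y) ≠ ∅`, then `M^λ(y) ⊆ M^{4λ}(x)`. -/
theorem stmt4 {d : ℕ} (K : Set (EuclideanSpace ℝ (Fin d)))
    (hK : Convex ℝ K) (hKc : IsCompact K) (hKi : (interior K).Nonempty)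
    (lam : ℝ) (hl0 : 0 < lam) (hl5 : lam ≤ 1 / 5)
    (x y : EuclideanSpace ℝ (Fin d)) (hx : x ∈ K) (hy : y ∈ K)
    (hmeet : (Mreg K x lam ∩ Mreg K y lam).Nonempty) :
    Mreg K y lam ⊆ Mreg K x (4 * lam) := by
  obtain ⟨p, ⟨u, hu1, hu2, hpu⟩, ⟨v, hv1, hv2, hpv⟩⟩ := hmeet
  rintro z ⟨w, hw1, hw2, rfl⟩
  have hy_eq : y = x + lam • u - lam • v := by
    rw [eq_sub_iff_add_eq]
    exact (hpu.symm.trans hpv).symm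
  have h1p : (0:ℝ) < 1 + lam := by linarith
  have h1m : (0:ℝ) < 1 - lam := by linarith
  set α : ℝ := (1 - lam) / (4 * (1 + lam)) with hα
  set β : ℝ := (1 + lam) / (4 * (1 - lam)) with hβ
  have hα0 : 0 ≤ α := by positivity
  have hβ0 : 0 ≤ β := by positivity
  have hα38 : α ≤ 3 / 8 := by
    rw [hα, div_le_iff₀ (by positivity)]; nlinarith
  have hβ38 : β ≤ 3 / 8 := by
    rw [hβ, div_le_iff₀ (by positivity)]; nlinarith
  refine ⟨(4:ℝ)⁻¹ • (u - v + w), ?_, ?_, ?_⟩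
  · have hmem := combo4 hK hx hu1 hv2 hw1 (a := 3/4 - 2*α) (b := α) (c := α) (e := 1/4)
      (by linarith) hα0 hα0 (by norm_num) (by ring)
    have heq : x + (4:ℝ)⁻¹ • (u - v + w) =
        (3/4 - 2*α) • x + α • (x + u) + α • (y - v) + (1/4 : ℝ) • (y + w) := by
      rw [hy_eq, hα]
      match_scalars <;> field_simp <;> ring
    rw [heq]; exact hmem
  · have hmem := combo4 hK hx hu2 hv1 hw2 (a := 3/4 - 2*β) (b := β) (c := β) (e := 1/4)
      (by linarith) hβ0 hβ0 (by norm_num) (by ring)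
    have heq : x - (4:ℝ)⁻¹ • (u - v + w) =
        (3/4 - 2*β) • x + β • (x - u) + β • (y + v) + (1/4 : ℝ) • (y - w) := by
      rw [hy_eq, hβ]
      match_scalars <;> field_simp <;> ring
    rw [heq]; exact hmem
  · rw [hy_eq]
    match_scalars <;> field_simp <;> ring
end

section
/- Let K ⊂ ℝ^d be a convex body, let C be a cap of K, and let x ∈ K be a point such that C ∩ M′(x) ≠ ∅. Then M′(x) ⊆ C², where C² denotes the 2-expansion of the cap C. -/
open scoped RealInnerProductSpace

/-- Let `K ⊆ ℝ^d` be a convex body, let `C` be a cap of `K` (the nonempty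
intersection of `K` with a closed halfspace `{z | ⟪v,z⟫ ≥ c}`, `v` a unit vector), and let
`x ∈ K` be such that `C ∩ M′(x) ≠ ∅`. Then `M′(x) ⊆ C²`, where with `s = sup_{z∈K} ⟪v,z⟫`
(so `width(C) = s - c`) the 2-expansion of `C` is the cap `C² = K ∩ {z | ⟪v,z⟫ ≥ s - 2(s-c)}`
cut at distance `2·width(C)` from the supporting hyperplane `⟪v,·⟫ = s`. -/
theorem stmt5 {d : ℕ} (K : Set (EuclideanSpace ℝ (Fin d)))
    (hK : Convex ℝ K) (hKc : IsCompact K) (hKi : (interior K).Nonempty)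
    (v : EuclideanSpace ℝ (Fin d)) (hv : ‖v‖ = 1) (c : ℝ)
    (hcap : (K ∩ {z | c ≤ ⟪v, z⟫}).Nonempty)
    (x : EuclideanSpace ℝ (Fin d)) (hx : x ∈ K)
    (hmeet : ((K ∩ {z | c ≤ ⟪v, z⟫}) ∩ Mreg K x (1 / 5)).Nonempty) :
    Mreg K x (1 / 5) ⊆
      K ∩ {z | sSup ((fun z => (⟪v, z⟫ : ℝ)) '' K) -
        2 * (sSup ((fun z => (⟪v, z⟫ : ℝ)) '' K) - c) ≤ ⟪v, z⟫} := by
  set f : EuclideanSpace ℝ (Fin d) → ℝ := fun z => ⟪v, z⟫ with hf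
  have hcont : Continuous f := continuous_const.inner continuous_id
  have hbdd : BddAbove (f '' K) := (hKc.image hcont).bddAbove
  set s := sSup (f '' K) with hs
  have hle : ∀ z ∈ K, f z ≤ s := fun z hz => le_csSup hbdd ⟨z, hz, rfl⟩
  obtain ⟨w, ⟨⟨hwK, hwc⟩, y₀, hy₀₁, hy₀₂, hw⟩⟩ := hmeet
  have hsc : c ≤ s := le_trans hwc (hle w hwK)
  have hβ : f w = f x + (1/5) * f y₀ := by
    simp only [hf, hw, inner_add_right, inner_smul_right]
  have hβ' : f x + f y₀ ≤ s := by
    have := hle _ hy₀₁; simp only [hf, inner_add_right] at this; exact this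
  have hwc' : c ≤ f w := hwc
  have ht : (5*c - s)/4 ≤ f x := by
    rw [hβ] at hwc'; linarith
  intro z hz
  obtain ⟨y, hy₁, hy₂, hzeq⟩ := hz
  have hzK : z ∈ K := by
    have := hK hy₁ hy₂ (by norm_num : (0:ℝ) ≤ 3/5) (by norm_num : (0:ℝ) ≤ 2/5)
      (by norm_num)
    have heq : (3/5 : ℝ) • (x + y) + (2/5 : ℝ) • (x - y) = x + (1/5 : ℝ) • y := by
      rw [smul_add, smul_sub]
      module
    rw [heq] at this
    rwa [hzeq]
  refine ⟨hzK, ?_⟩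
  have hy' : f x - f y ≤ s := by
    have h := hle _ hy₂; simp only [hf, inner_sub_right] at h; linarith
  have hfz : f z = f x + (1/5) * f y := by
    simp only [hf, hzeq, inner_add_right, inner_smul_right]
  show s - 2 * (s - c) ≤ f z
  rw [hfz]; linarith
end

section
/- Let K ⊂ ℝ^d be a convex body. If x ∈ K and x′ ∈ M′(x), then (4/5)·δ(x) ≤ δ(x′) ≤ (4/3)·δ(x). -/
open Metric Set

/-- A segment from a point of a closed set `K` to a point outside `K` meets the frontier
at distance at most `dist z w` from `z`. -/
lemma exists_frontier_dist_le {E : Type*} [NormedAddCommGroup E] [NormedSpace ℝ E]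
    {K : Set E} (hKcl : IsClosed K) {z w : E} (hz : z ∈ K) (hw : w ∉ K) :
    ∃ p ∈ frontier K, dist z p ≤ dist z w := by
  set γ : ℝ → E := fun t => z + t • (w - z) with hγ
  have hγc : Continuous γ := by fun_prop
  set S : Set ℝ := Icc (0:ℝ) 1 ∩ γ ⁻¹' K with hS
  have hS0 : (0:ℝ) ∈ S := by simp [hS, hγ, hz]
  have hScomp : IsCompact S := isCompact_Icc.inter_right (hKcl.preimage hγc)
  have htm : sSup S ∈ S := hScomp.sSup_mem ⟨0, hS0⟩
  set t₀ := sSup S with ht₀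
  have ht01 : t₀ ∈ Icc (0:ℝ) 1 := htm.1
  have hγ1 : γ 1 = w := by simp [hγ]
  have ht1 : t₀ < 1 := by
    rcases lt_or_eq_of_le ht01.2 with h | h
    · exact h
    · exact absurd (by rw [← h] at hγ1; rw [← hγ1]; exact htm.2) hw
  have hni : γ t₀ ∉ interior K := by
    intro hint
    have hopen : IsOpen (γ ⁻¹' interior K) := isOpen_interior.preimage hγc
    obtain ⟨ε, hε, hball⟩ := Metric.isOpen_iff.mp hopen t₀ hint
    set t := min (t₀ + ε / 2) ((t₀ + 1) / 2) with htdef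
    have htgt : t₀ < t := lt_min (by linarith) (by linarith)
    have htlt1 : t ≤ (t₀ + 1) / 2 := min_le_right _ _
    have htball : t ∈ Metric.ball t₀ ε := by
      rw [Metric.mem_ball, Real.dist_eq, abs_of_pos (by linarith)]
      calc t - t₀ ≤ (t₀ + ε / 2) - t₀ := by
            have := min_le_left (t₀ + ε / 2) ((t₀ + 1) / 2); linarith
        _ < ε := by linarith
    have htS : t ∈ S := ⟨⟨by linarith [ht01.1], by linarith⟩,
      show γ t ∈ K from interior_subset (hball htball)⟩
    exact absurd (le_csSup hScomp.bddAbove htS) (not_le.mpr htgt)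
  refine ⟨γ t₀, ⟨subset_closure htm.2, hni⟩, ?_⟩
  have : dist z (γ t₀) = t₀ * ‖w - z‖ := by
    rw [dist_eq_norm', hγ]
    simp only [add_sub_cancel_left]
    rw [norm_smul, Real.norm_eq_abs, abs_of_nonneg ht01.1]
  rw [this, dist_eq_norm]
  nlinarith [ht01.1, ht01.2, norm_nonneg (z - w), norm_sub_rev z w]

/-- If `K` is closed and `z ∈ K`, the open ball around `z` of radius the distance to the
frontier is contained in `K`. -/
lemma ball_infDist_frontier_subset {E : Type*} [NormedAddCommGroup E] [NormedSpace ℝ E]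
    {K : Set E} (hKcl : IsClosed K) {z : E} (hz : z ∈ K) :
    ball z (infDist z (frontier K)) ⊆ K := by
  intro w hw
  by_contra hwK
  obtain ⟨p, hp, hdp⟩ := exists_frontier_dist_le hKcl hz hwK
  have h1 : infDist z (frontier K) ≤ dist z p := infDist_le_dist_of_mem hp
  rw [mem_ball, dist_comm] at hw
  linarith

/-- If an open ball around `z` of radius `r` is contained in `K` and the frontier of `K`
is nonempty, then `r ≤ infDist z (frontier K)`. -/
lemma le_infDist_frontier_of_ball_subset {E : Type*} [NormedAddCommGroup E]
    {K : Set E} {z : E} {r : ℝ} (hb : ball z r ⊆ K) (h : (frontier K).Nonempty) :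
    r ≤ infDist z (frontier K) := by
  by_contra hlt
  push_neg at hlt
  obtain ⟨w, hw, hwd⟩ := (infDist_lt_iff h).mp hlt
  have hwb : w ∈ ball z r := by rwa [mem_ball, dist_comm]
  exact hw.2 (interior_maximal hb isOpen_ball hwb)

/-- Let `K ⊆ ℝ^d` be a convex body. If `x ∈ K` and `x′ ∈ M′(x)`, then
`(4/5)·δ(x) ≤ δ(x′) ≤ (4/3)·δ(x)`, where `δ(z)` denotes the distance from `z` to `∂K`. -/
theorem stmt6 {d : ℕ} (K : Set (EuclideanSpace ℝ (Fin d)))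
    (hK : Convex ℝ K) (hKc : IsCompact K) (hKi : (interior K).Nonempty)
    (x x' : EuclideanSpace ℝ (Fin d)) (hx : x ∈ K) (hx' : x' ∈ Mreg K x (1 / 5)) :
    4 / 5 * Metric.infDist x (frontier K) ≤ Metric.infDist x' (frontier K) ∧
      Metric.infDist x' (frontier K) ≤ 4 / 3 * Metric.infDist x (frontier K) := by
  obtain ⟨y, hy1, hy2, rfl⟩ := hx'
  have hKcl : IsClosed K := hKc.isClosed
  set x' := x + (1/5 : ℝ) • y with hx'def
  have hx'K : x' ∈ K := by
    have := hK hx hy1 (by norm_num : (0:ℝ) ≤ 4/5) (by norm_num : (0:ℝ) ≤ 1/5) (by norm_num)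
    convert this using 1
    rw [hx'def]
    module
  rcases (frontier K).eq_empty_or_nonempty with hfe | hfn
  · simp [hfe, infDist_empty]
  have hd := infDist_nonneg (x := x) (s := frontier K)
  have hd' := infDist_nonneg (x := x') (s := frontier K)
  constructor
  · -- lower bound
    have hball : ball x' (4/5 * infDist x (frontier K)) ⊆ K := by
      intro w hw
      have hu : x + (5/4 : ℝ) • (w - x') ∈ ball x (infDist x (frontier K)) := by
        rw [mem_ball] at hw ⊢
        have : dist (x + (5/4 : ℝ) • (w - x')) x = (5/4) * dist w x' := by
          rw [dist_eq_norm, dist_eq_norm]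
          have : x + (5/4 : ℝ) • (w - x') - x = (5/4 : ℝ) • (w - x') := by module
          rw [this, norm_smul]
          simp [abs_of_nonneg]
        rw [this]
        linarith
      have huK : x + (5/4 : ℝ) • (w - x') ∈ K := ball_infDist_frontier_subset hKcl hx hu
      have := hK huK hy1 (by norm_num : (0:ℝ) ≤ 4/5) (by norm_num : (0:ℝ) ≤ 1/5) (by norm_num)
      convert this using 1
      rw [hx'def]
      module
    exact le_infDist_frontier_of_ball_subset hball hfn
  · -- upper bound
    have hball : ball x (5/6 * infDist x' (frontier K)) ⊆ K := by
      intro w hw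
      have hu : x' + (6/5 : ℝ) • (w - x) ∈ ball x' (infDist x' (frontier K)) := by
        rw [mem_ball] at hw ⊢
        have : dist (x' + (6/5 : ℝ) • (w - x)) x' = (6/5) * dist w x := by
          rw [dist_eq_norm, dist_eq_norm]
          have : x' + (6/5 : ℝ) • (w - x) - x' = (6/5 : ℝ) • (w - x) := by module
          rw [this, norm_smul]
          simp [abs_of_nonneg]
        rw [this]
        linarith
      have huK : x' + (6/5 : ℝ) • (w - x) ∈ K := ball_infDist_frontier_subset hKcl hx'K hu
      have := hK huK hy2 (by norm_num : (0:ℝ) ≤ 5/6) (by norm_num : (0:ℝ) ≤ 1/6) (by norm_num)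
      convert this using 1
      rw [hx'def]
      module
    have h56 : 5/6 * infDist x' (frontier K) ≤ infDist x (frontier K) :=
      le_infDist_frontier_of_ball_subset hball hfn
    linarith
end

section
/- Let 0 < γ ≤ 1 be a constant and let K ⊂ ℝ^d be a convex body in γ-canonical form. Let x ∈ K be a point at distance δ from ∂K, where δ ≤ Δ₀ = (1/2)(γ²/(4d))^d. Then shadow(M′(x)) ⊆ M^{4/γ}(x). -/
/-- The shadow of a region `R ⊆ K` with respect to `K` (and the origin `O`): the set of
points `z ∈ K` such that the segment `Oz` intersects `R`. -/
def shadowOf {d : ℕ} (K R : Set (EuclideanSpace ℝ (Fin d))) :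
    Set (EuclideanSpace ℝ (Fin d)) :=
  {z ∈ K | ∃ t : ℝ, 0 ≤ t ∧ t ≤ 1 ∧ t • z ∈ R}

lemma conv3 {E : Type*} [AddCommGroup E] [Module ℝ E] {K : Set E} (hK : Convex ℝ K)
    {p q r : E} (hp : p ∈ K) (hq : q ∈ K) (hr : r ∈ K)
    {a b c : ℝ} (ha : 0 ≤ a) (hb : 0 ≤ b) (hc : 0 ≤ c) (habc : a + b + c = 1) :
    a • p + b • q + c • r ∈ K := by
  have := hK.sum_mem (t := (Finset.univ : Finset (Fin 3))) (w := ![a, b, c])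
    (z := ![p, q, r]) (by intro i _; fin_cases i <;> simpa)
    (by simp [Fin.sum_univ_three]; linarith)
    (by intro i _; fin_cases i <;> simpa)
  simpa [Fin.sum_univ_three] using this

/-- Let `0 < γ ≤ 1` be a constant and `K ⊆ ℝ^d` a convex body in
γ-canonical form. Let `x ∈ K` be at distance `δ ≤ Δ₀ = (1/2)(γ²/(4d))^d` from `∂K`.
Then `shadow(M′(x)) ⊆ M^{4/γ}(x)`. -/
theorem stmt9 {d : ℕ} (γ : ℝ) (hγ0 : 0 < γ) (hγ1 : γ ≤ 1)
    (K : Set (EuclideanSpace ℝ (Fin d)))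
    (hK : Convex ℝ K) (hKc : IsCompact K) (hKi : (interior K).Nonempty)
    (hcan₁ : Metric.closedBall (0 : EuclideanSpace ℝ (Fin d)) (γ / 2) ⊆ K)
    (hcan₂ : K ⊆ Metric.closedBall (0 : EuclideanSpace ℝ (Fin d)) (1 / 2))
    (x : EuclideanSpace ℝ (Fin d)) (hx : x ∈ K) (δ : ℝ)
    (hδ : Metric.infDist x (frontier K) = δ)
    (hδ0 : δ ≤ 1 / 2 * (γ ^ 2 / (4 * (d : ℝ))) ^ d) :
    shadowOf K (Mreg K x (1 / 5)) ⊆ Mreg K x (4 / γ) := by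
  rintro z ⟨hzK, t, ht0, ht1, w, hw1, hw2, hzw⟩
  have hγ4 : γ ≠ 0 := ne_of_gt hγ0
  have hw : w = (5 : ℝ) • (t • z) - (5 : ℝ) • x := by rw [hzw]; module
  have hxw : x - w = (6 : ℝ) • x - (5 * t) • z := by rw [hw]; module
  have hznorm : ‖z‖ ≤ 1 / 2 := by
    have := hcan₂ hzK
    simpa [Metric.mem_closedBall, dist_eq_norm] using this
  refine ⟨(γ / 4) • (z - x), ?_, ?_, ?_⟩
  · -- x + (γ/4)•(z-x) ∈ K
    have h := hK hx hzK (by linarith : (0:ℝ) ≤ 1 - γ / 4) (by linarith : (0:ℝ) ≤ γ / 4)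
      (by ring)
    convert h using 1
    module
  · -- x - (γ/4)•(z-x) ∈ K
    rcases le_or_gt t (γ / 2) with hcase | hcase
    · -- small t : use points (x-w), x, and a ball point
      set u : EuclideanSpace ℝ (Fin d) := (t * (1 + γ) - γ) • z with hu
      have huK : u ∈ K := by
        apply hcan₁
        have habs : |t * (1 + γ) - γ| ≤ γ := by
          rw [abs_le]
          constructor <;> nlinarith
        have : ‖u‖ ≤ γ / 2 := by
          rw [hu, norm_smul]
          calc |t * (1 + γ) - γ| * ‖z‖ ≤ γ * (1 / 2) := by
                apply mul_le_mul habs hznorm (norm_nonneg _) hγ0.le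
            _ = γ / 2 := by ring
        simpa [Metric.mem_closedBall, dist_eq_norm] using this
      have hcomb := conv3 hK hw2 hx huK
        (a := (1 + γ) / 20) (b := 3 / 4 - (1 + γ) / 20) (c := 1 / 4)
        (by linarith) (by linarith) (by norm_num) (by ring)
      convert hcomb using 1
      rw [hxw, hu]
      module
    · -- large t : use points (x-w), x, and 0
      have ht0' : (0 : ℝ) < t := lt_of_lt_of_le (by positivity) hcase.le
      have htne : t ≠ 0 := ne_of_gt ht0'
      have h0K : (0 : EuclideanSpace ℝ (Fin d)) ∈ K := by
        apply hcan₁; simp [Metric.mem_closedBall]; positivity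
      have hb : (0 : ℝ) ≤ 1 + γ / 4 - 3 * γ / (10 * t) := by
        have h1 : 3 * γ / (10 * t) ≤ 3 / 5 := by
          rw [div_le_iff₀ (by linarith)]
          nlinarith
        linarith
      have hc : (0 : ℝ) ≤ γ / (4 * t) - γ / 4 := by
        have : γ / 4 ≤ γ / (4 * t) := by
          apply div_le_div_of_nonneg_left hγ0.le (by linarith) (by linarith)
        linarith
      have ha : (0 : ℝ) ≤ γ / (20 * t) := by positivity
      have hsum : γ / (20 * t) + (1 + γ / 4 - 3 * γ / (10 * t)) + (γ / (4 * t) - γ / 4) = 1 := by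
        field_simp
        ring
      have hcomb := conv3 hK hw2 hx h0K ha hb hc hsum
      convert hcomb using 1
      rw [hxw]
      match_scalars <;> field_simp <;> ring
  · -- z = x + (4/γ) • ((γ/4) • (z - x))
    rw [smul_smul]
    have : 4 / γ * (γ / 4) = 1 := by field_simp
    rw [this, one_smul]
    abel
end

section
/- Let 0 < γ ≤ 1 be a constant and let K ⊂ ℝ^d be a convex body in γ-canonical form. Let x ∈ K be a point at distance δ from ∂K, where δ ≤ Δ₀ = (1/2)(γ²/(4d))^d. Then for every direction v ∈ normals(M′(x)), width_v(shadow(M′(x))) ≤ (8/(3γ))·δ. -/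
open scoped RealInnerProductSpace

/-- `normals(R)`: the set of outward unit normals of hyperplanes supporting `K` at some
point of `shadow(R)`. -/
def normalsOf {d : ℕ} (K R : Set (EuclideanSpace ℝ (Fin d))) :
    Set (EuclideanSpace ℝ (Fin d)) :=
  {v | ‖v‖ = 1 ∧ ∃ p ∈ shadowOf K R, ∀ z ∈ K, ⟪v, z⟫ ≤ ⟪v, p⟫}

/-- The directional width of a set `S` in direction `v`: `width_v(S) = sup_{p,q∈S} ⟪v, p−q⟫`. -/
noncomputable def dirWidth {d : ℕ} (v : EuclideanSpace ℝ (Fin d))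
    (S : Set (EuclideanSpace ℝ (Fin d))) : ℝ :=
  sSup {r : ℝ | ∃ p ∈ S, ∃ q ∈ S, r = ⟪v, p - q⟫}

/-! Let `p ∈ shadow(M′(x))` be a point where `K` is supported with unit normal `v`, and let
`t • p ∈ M′(x)`. A supporting hyperplane at the boundary point nearest to `x` has unit normal `u`,
support value `β ≥ γ/2`, and lies within `δ` of `x`; since `M′(x)` is `1/5` of a body centred at
`x` inside `K`, the `u`-coordinate of `t • p` is at least `β - 6δ/5`, so `1 - t ≤ 12δ/(5γ)`.
Along `v`, with support value `h = ⟪v, p⟫ ≤ 1/2`, the same reasoning gives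
`(4/5)(h - ⟪v, x⟫) ≤ (1 - t) h ≤ (1 - t)/2`, hence `h - ⟪v, x⟫ ≤ 3δ/(2γ)`. Every point of the shadow then has
`v`-coordinate between `⟪v, x⟫ - (h - ⟪v, x⟫)/5` and `h`; the lower bound needs the
`v`-coordinate of `M′(x)` to be positive, which is where `δ ≤ Δ₀ ≤ γ²/8` enters.
The width is thus at most `(6/5)(h - ⟪v, x⟫) ≤ 9δ/(5γ)`. -/

section InnerProductSpace

variable {E : Type*} [NormedAddCommGroup E] [InnerProductSpace ℝ E]

theorem le_of_closedBall_subset_of_forall_inner_le {K : Set E} {r c : ℝ} {w : E}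
    (hr : 0 ≤ r) (hK : Metric.closedBall 0 r ⊆ K) (hw : ‖w‖ = 1) (hc : ∀ k ∈ K, ⟪w, k⟫ ≤ c) :
    r ≤ c := by
  have hmem : r • w ∈ K := hK (by simp [norm_smul, hw, abs_of_nonneg hr])
  simpa [real_inner_smul_right, real_inner_self_eq_norm_sq, hw] using hc _ hmem

theorem exists_unit_forall_inner_le_of_notMem_interior [CompleteSpace E] {K : Set E}
    (hK : Convex ℝ K) (hKi : (interior K).Nonempty) {z : E} (hz : z ∉ interior K) :
    ∃ u : E, ‖u‖ = 1 ∧ ∀ k ∈ K, ⟪u, k⟫ ≤ ⟪u, z⟫ := by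
  obtain ⟨f, hf0, hf⟩ := geometric_hahn_banach_of_nonempty_interior_point hK hz hKi
  set w := (InnerProductSpace.toDual ℝ E).symm f
  have hw : w ≠ 0 := by simpa [w] using hf0
  refine ⟨‖w‖⁻¹ • w, by simp [norm_smul, hw], fun k hk => ?_⟩
  simp only [real_inner_smul_left, w, InnerProductSpace.toDual_symm_apply]
  exact mul_le_mul_of_nonneg_left (hf k hk) (by positivity)

theorem exists_unit_forall_inner_le_add_infDist [ProperSpace E] {K : Set E} (hK : Convex ℝ K)
    (hKi : (interior K).Nonempty) (hfr : (frontier K).Nonempty) (x : E) :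
    ∃ u : E, ‖u‖ = 1 ∧ ∀ k ∈ K, ⟪u, k⟫ ≤ ⟪u, x⟫ + Metric.infDist x (frontier K) := by
  obtain ⟨z, hz, hxz⟩ := isClosed_frontier.exists_infDist_eq_dist hfr x
  obtain ⟨u, hu1, hu⟩ := exists_unit_forall_inner_le_of_notMem_interior hK hKi hz.2
  refine ⟨u, hu1, fun k hk => ?_⟩
  calc ⟪u, k⟫ ≤ ⟪u, z⟫ := hu k hk
    _ = ⟪u, x⟫ + ⟪u, z - x⟫ := by rw [inner_sub_right]; ring
    _ ≤ ⟪u, x⟫ + ‖u‖ * ‖z - x‖ := by gcongr; exact real_inner_le_norm u _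
    _ = ⟪u, x⟫ + Metric.infDist x (frontier K) := by rw [hu1, one_mul, hxz, dist_comm, dist_eq_norm]

end InnerProductSpace

section Macbeath

variable {d : ℕ} {K : Set (EuclideanSpace ℝ (Fin d))} {x z w : EuclideanSpace ℝ (Fin d)}
  {l c : ℝ}

theorem abs_inner_sub_le_of_mem_Mreg (hl : 0 ≤ l) (hw : ∀ k ∈ K, ⟪w, k⟫ ≤ c)
    (hz : z ∈ Mreg K x l) : |⟪w, z - x⟫| ≤ l * (c - ⟪w, x⟫) := by
  obtain ⟨y, hy₁, hy₂, rfl⟩ := hz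
  have h₁ := hw _ hy₁
  have h₂ := hw _ hy₂
  rw [inner_add_right] at h₁
  rw [inner_sub_right] at h₂
  rw [add_sub_cancel_left, real_inner_smul_right, abs_mul, abs_of_nonneg hl]
  exact mul_le_mul_of_nonneg_left (abs_le.2 ⟨by linarith, by linarith⟩) hl

theorem mul_sub_inner_le_of_smul_mem_Mreg {p u v : EuclideanSpace ℝ (Fin d)} {t β δ : ℝ}
    (hl : 0 ≤ l) (ht₀ : 0 ≤ t) (hp : p ∈ K) (htp : t • p ∈ Mreg K x l)
    (hu : ∀ k ∈ K, ⟪u, k⟫ ≤ β) (hβ : 0 ≤ β) (hβx : β ≤ ⟪u, x⟫ + δ)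
    (hv : ∀ k ∈ K, ⟪v, k⟫ ≤ ⟪v, p⟫) (hvp : 0 ≤ ⟪v, p⟫) :
    (1 - l) * β * (⟪v, p⟫ - ⟪v, x⟫) ≤ (1 + l) * ⟪v, p⟫ * δ := by
  have hu' := abs_le.1 (abs_inner_sub_le_of_mem_Mreg hl hu htp)
  have hv' := abs_le.1 (abs_inner_sub_le_of_mem_Mreg hl hv htp)
  simp only [inner_sub_right, real_inner_smul_right] at hu' hv'
  have hdepth : (1 - t) * β ≤ (1 + l) * δ := by
    nlinarith [mul_le_mul_of_nonneg_left (hu p hp) ht₀]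
  have hgap : (1 - l) * (⟪v, p⟫ - ⟪v, x⟫) ≤ (1 - t) * ⟪v, p⟫ := by linarith
  calc (1 - l) * β * (⟪v, p⟫ - ⟪v, x⟫) ≤ (1 - t) * ⟪v, p⟫ * β := by
        rw [mul_right_comm]; exact mul_le_mul_of_nonneg_right hgap hβ
    _ = (1 - t) * β * ⟪v, p⟫ := by ring
    _ ≤ (1 + l) * δ * ⟪v, p⟫ := mul_le_mul_of_nonneg_right hdepth hvp
    _ = (1 + l) * ⟪v, p⟫ * δ := by ring

theorem le_inner_of_mem_shadowOf_Mreg (hl : 0 ≤ l) (hw : ∀ k ∈ K, ⟪w, k⟫ ≤ c)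
    (hpos : 0 < ⟪w, x⟫ - l * (c - ⟪w, x⟫)) (hz : z ∈ shadowOf K (Mreg K x l)) :
    ⟪w, x⟫ - l * (c - ⟪w, x⟫) ≤ ⟪w, z⟫ := by
  obtain ⟨-, s, hs₀, hs₁, hsz⟩ := hz
  have hlow := (abs_le.1 (abs_inner_sub_le_of_mem_Mreg hl hw hsz)).1
  rw [inner_sub_right, real_inner_smul_right] at hlow
  have hwz : 0 < ⟪w, z⟫ := pos_of_mul_pos_right (by linarith) hs₀
  nlinarith

theorem dirWidth_le {v : EuclideanSpace ℝ (Fin d)} {S : Set (EuclideanSpace ℝ (Fin d))} {M : ℝ}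
    (hM : 0 ≤ M) (h : ∀ p ∈ S, ∀ q ∈ S, ⟪v, p - q⟫ ≤ M) : dirWidth v S ≤ M :=
  Real.sSup_le (by rintro r ⟨p, hp, q, hq, rfl⟩; exact h p hp q hq) hM

end Macbeath

theorem half_mul_pow_le {γ : ℝ} {d : ℕ} (hγ0 : 0 ≤ γ) (hγ1 : γ ≤ 1) (hd : d ≠ 0) :
    1 / 2 * (γ ^ 2 / (4 * (d : ℝ))) ^ d ≤ γ ^ 2 / 8 := by
  have hbase : γ ^ 2 / (4 * d) ≤ γ ^ 2 / 4 := by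
    gcongr
    exact le_mul_of_one_le_right (by norm_num) (by exact_mod_cast Nat.one_le_iff_ne_zero.2 hd)
  have := pow_le_of_le_one (by positivity) (hbase.trans (by nlinarith)) hd
  linarith

theorem stmt10_general {d : ℕ} (γ : ℝ) (hγ0 : 0 < γ) (hγ1 : γ ≤ 1)
    (K : Set (EuclideanSpace ℝ (Fin d)))
    (hK : Convex ℝ K) (hKi : (interior K).Nonempty)
    (hcan₁ : Metric.closedBall (0 : EuclideanSpace ℝ (Fin d)) (γ / 2) ⊆ K)
    (hcan₂ : K ⊆ Metric.closedBall (0 : EuclideanSpace ℝ (Fin d)) (1 / 2))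
    (x : EuclideanSpace ℝ (Fin d)) (hx : x ∈ K) (δ : ℝ)
    (hδ : Metric.infDist x (frontier K) = δ)
    (hδ0 : δ ≤ 1 / 2 * (γ ^ 2 / (4 * (d : ℝ))) ^ d)
    (v : EuclideanSpace ℝ (Fin d)) (hv : v ∈ normalsOf K (Mreg K x (1 / 5))) :
    dirWidth v (shadowOf K (Mreg K x (1 / 5))) ≤ 8 / (3 * γ) * δ := by
  obtain ⟨hv1, p, ⟨hp, t, ht₀, -, htp⟩, hvp⟩ := hv
  have hd : d ≠ 0 := by rintro rfl; simp [Subsingleton.elim v 0] at hv1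
  have hδγ : δ ≤ γ ^ 2 / 8 := hδ0.trans (half_mul_pow_le hγ0.le hγ1 hd)
  have hδ₀ : 0 ≤ δ := hδ ▸ Metric.infDist_nonneg
  have hvK : v ∉ K := fun h => absurd (hcan₂ h) (by norm_num [hv1])
  obtain ⟨u, hu1, hu⟩ := exists_unit_forall_inner_le_add_infDist hK hKi
    (nonempty_frontier_iff.2 ⟨⟨x, hx⟩, fun h => hvK (h ▸ trivial)⟩) x
  rw [hδ] at hu
  have hβ := le_of_closedBall_subset_of_forall_inner_le (by positivity) hcan₁ hu1 hu
  have hγp := le_of_closedBall_subset_of_forall_inner_le (by positivity) hcan₁ hv1 hvp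
  have hp2 : ⟪v, p⟫ ≤ 1 / 2 := (real_inner_le_norm v p).trans (by simpa [hv1] using hcan₂ hp)
  have hxp := hvp x hx
  have hkey := mul_sub_inner_le_of_smul_mem_Mreg (by norm_num) ht₀ hp htp hu
    (by linarith) le_rfl hvp (by linarith)
  have hgap : γ * (⟪v, p⟫ - ⟪v, x⟫) ≤ 3 / 2 * δ := by
    nlinarith [mul_le_mul_of_nonneg_right hβ (sub_nonneg.2 hxp)]
  have hgapγ : ⟪v, p⟫ - ⟪v, x⟫ ≤ 3 * γ / 16 :=
    le_of_mul_le_mul_left (by nlinarith) hγ0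
  have hpos : 0 < ⟪v, x⟫ - 1 / 5 * (⟪v, p⟫ - ⟪v, x⟫) := by linarith
  refine dirWidth_le (by positivity) fun z₁ hz₁ z₂ hz₂ => ?_
  rw [inner_sub_right, div_mul_eq_mul_div, le_div_iff₀ (by positivity)]
  nlinarith [hvp z₁ hz₁.1, le_inner_of_mem_shadowOf_Mreg (by norm_num) hvp hpos hz₂]

/-- Let `0 < γ ≤ 1` be a constant and `K ⊆ ℝ^d` a convex body in
γ-canonical form. Let `x ∈ K` be at distance `δ ≤ Δ₀ = (1/2)(γ²/(4d))^d` from `∂K`.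
Then for every `v ∈ normals(M′(x))`, `width_v(shadow(M′(x))) ≤ (8/(3γ))·δ`. -/
theorem stmt10 {d : ℕ} (γ : ℝ) (hγ0 : 0 < γ) (hγ1 : γ ≤ 1)
    (K : Set (EuclideanSpace ℝ (Fin d)))
    (hK : Convex ℝ K) (hKc : IsCompact K) (hKi : (interior K).Nonempty)
    (hcan₁ : Metric.closedBall (0 : EuclideanSpace ℝ (Fin d)) (γ / 2) ⊆ K)
    (hcan₂ : K ⊆ Metric.closedBall (0 : EuclideanSpace ℝ (Fin d)) (1 / 2))
    (x : EuclideanSpace ℝ (Fin d)) (hx : x ∈ K) (δ : ℝ)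
    (hδ : Metric.infDist x (frontier K) = δ)
    (hδ0 : δ ≤ 1 / 2 * (γ ^ 2 / (4 * (d : ℝ))) ^ d)
    (v : EuclideanSpace ℝ (Fin d)) (hv : v ∈ normalsOf K (Mreg K x (1 / 5))) :
    dirWidth v (shadowOf K (Mreg K x (1 / 5))) ≤ 8 / (3 * γ) * δ :=
  stmt10_general γ hγ0 hγ1 K hK hKi hcan₁ hcan₂ x hx δ hδ hδ0 v hv
end

section
/- Let 0 < γ ≤ 1 be a constant and let K ⊂ ℝ^d be a convex body in γ-canonical form. Let x ∈ K be a point at distance δ from ∂K, where δ ≤ Δ₀ = (1/2)(γ²/(4d))^d. Then for every direction v ∈ normals(M′(x)), width_v(M^{4/γ}(x)) ≤ (160/(3γ²))·δ. -/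
open scoped RealInnerProductSpace

lemma aux_ball_le_infDist {d : ℕ} {K : Set (EuclideanSpace ℝ (Fin d))}
    {c : EuclideanSpace ℝ (Fin d)} {r : ℝ} (hfr : (frontier K).Nonempty)
    (hb : Metric.closedBall c r ⊆ K) : r ≤ Metric.infDist c (frontier K) := by
  by_contra hlt
  push_neg at hlt
  obtain ⟨w, hwf, hwd⟩ := (Metric.infDist_lt_iff hfr).mp hlt
  have hwi : w ∈ interior K := by
    have hsub : Metric.ball c r ⊆ interior K :=
      interior_maximal (Metric.ball_subset_closedBall.trans hb) Metric.isOpen_ball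
    exact hsub (Metric.mem_ball'.mpr hwd)
  exact hwf.2 hwi

lemma aux_subset_of_infDist {d : ℕ} {K : Set (EuclideanSpace ℝ (Fin d))}
    (hKcl : IsClosed K) {c : EuclideanSpace ℝ (Fin d)} {r : ℝ} (hr0 : 0 ≤ r)
    (hc : c ∈ K) (hr : r < Metric.infDist c (frontier K)) :
    Metric.closedBall c r ⊆ K := by
  intro w hw
  by_contra hwK
  have hseg : segment ℝ c w ⊆ Metric.closedBall c r :=
    (convex_closedBall c r).segment_subset (Metric.mem_closedBall_self hr0) hw
  have hnofr : ∀ z ∈ segment ℝ c w, z ∉ frontier K := by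
    intro z hz hzf
    have h1 : dist c z ≤ r := Metric.mem_closedBall'.mp (hseg hz)
    have h2 : Metric.infDist c (frontier K) ≤ dist c z :=
      Metric.infDist_le_dist_of_mem hzf
    linarith
  have hpc : IsPreconnected (segment ℝ c w) := (convex_segment c w).isPreconnected
  have hcov : segment ℝ c w ⊆ interior K ∪ (closure K)ᶜ := by
    intro z hz
    by_cases hcl : z ∈ closure K
    · by_cases hint : z ∈ interior K
      · exact Or.inl hint
      · exact absurd ⟨hcl, hint⟩ (hnofr z hz)
    · exact Or.inr hcl
  have hcint : c ∈ interior K := by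
    have hcf : c ∉ frontier K := hnofr c (left_mem_segment ℝ c w)
    by_contra hci
    exact hcf ⟨subset_closure hc, hci⟩
  have h1 : (segment ℝ c w ∩ interior K).Nonempty :=
    ⟨c, left_mem_segment ℝ c w, hcint⟩
  have h2 : (segment ℝ c w ∩ (closure K)ᶜ).Nonempty :=
    ⟨w, right_mem_segment ℝ c w, by rwa [hKcl.closure_eq]⟩
  obtain ⟨z, _, hzi, hzc⟩ := hpc (interior K) (closure K)ᶜ isOpen_interior
    (isClosed_closure.isOpen_compl) hcov h1 h2
  exact hzc (subset_closure (interior_subset hzi))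

set_option maxHeartbeats 1000000 in
/-- Let `0 < γ ≤ 1` be a constant and `K ⊆ ℝ^d` a convex body in
γ-canonical form. Let `x ∈ K` be at distance `δ ≤ Δ₀ = (1/2)(γ²/(4d))^d` from `∂K`.
Then for every `v ∈ normals(M′(x))`, `width_v(M^{4/γ}(x)) ≤ (160/(3γ²))·δ`. -/
theorem stmt11 {d : ℕ} (γ : ℝ) (hγ0 : 0 < γ) (hγ1 : γ ≤ 1)
    (K : Set (EuclideanSpace ℝ (Fin d)))
    (hK : Convex ℝ K) (hKc : IsCompact K) (hKi : (interior K).Nonempty)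
    (hcan₁ : Metric.closedBall (0 : EuclideanSpace ℝ (Fin d)) (γ / 2) ⊆ K)
    (hcan₂ : K ⊆ Metric.closedBall (0 : EuclideanSpace ℝ (Fin d)) (1 / 2))
    (x : EuclideanSpace ℝ (Fin d)) (hx : x ∈ K) (δ : ℝ)
    (hδ : Metric.infDist x (frontier K) = δ)
    (hδ0 : δ ≤ 1 / 2 * (γ ^ 2 / (4 * (d : ℝ))) ^ d)
    (v : EuclideanSpace ℝ (Fin d)) (hv : v ∈ normalsOf K (Mreg K x (1 / 5))) :
    dirWidth v (Mreg K x (4 / γ)) ≤ 160 / (3 * γ ^ 2) * δ := by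
  obtain ⟨hv1, p, ⟨hpK, t, ht0, ht1, htp⟩, hsupp⟩ := hv
  obtain ⟨y, hxpy, hxmy, hq⟩ := htp
  have hKcl : IsClosed K := hKc.isClosed
  have hδnn : 0 ≤ δ := hδ ▸ Metric.infDist_nonneg
  have hO : (0 : EuclideanSpace ℝ (Fin d)) ∈ K :=
    hcan₁ (Metric.mem_closedBall_self (by positivity))
  -- the frontier of K is nonempty
  have hfr : (frontier K).Nonempty := by
    rw [nonempty_frontier_iff]
    refine ⟨⟨x, hx⟩, fun hU => ?_⟩
    have hmem : ((2 : ℝ) • v) ∈ K := by rw [hU]; exact Set.mem_univ _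
    have h2 := hcan₂ hmem
    rw [Metric.mem_closedBall, dist_zero_right, norm_smul, hv1] at h2
    norm_num at h2
  set q : EuclideanSpace ℝ (Fin d) := x + (1 / 5 : ℝ) • y with hqdef
  have hqK : q ∈ K := by
    rw [← hq]
    have := hK hpK hO ht0 (by linarith : (0:ℝ) ≤ 1 - t) (by ring)
    simpa using this
  -- lower bound on the distance from q to the frontier
  have hlow : (1 - t) * (γ / 2) ≤ Metric.infDist q (frontier K) := by
    apply aux_ball_le_infDist hfr
    intro w hw
    have hw' : ‖w - q‖ ≤ (1 - t) * (γ / 2) := by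
      rwa [Metric.mem_closedBall, dist_eq_norm] at hw
    by_cases h1 : t = 1
    · have : ‖w - q‖ ≤ 0 := by rw [h1] at hw'; simpa using hw'
      have hwq : w = q := by
        have := le_antisymm this (norm_nonneg _)
        rwa [norm_sub_eq_zero_iff] at this
      rwa [hwq]
    · have h1t : 0 < 1 - t := lt_of_le_of_ne (by linarith) (fun hc => h1 (by linarith))
      have hne : (1 - t) ≠ 0 := ne_of_gt h1t
      have hc0 : ((1 - t)⁻¹ • (w - q)) ∈ Metric.closedBall (0 : EuclideanSpace ℝ (Fin d)) (γ / 2) := by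
        rw [Metric.mem_closedBall, dist_zero_right, norm_smul, norm_inv,
          Real.norm_eq_abs, abs_of_pos h1t]
        calc (1 - t)⁻¹ * ‖w - q‖ ≤ (1 - t)⁻¹ * ((1 - t) * (γ / 2)) := by
              apply mul_le_mul_of_nonneg_left hw' (by positivity)
          _ = γ / 2 := by field_simp
      have hmem := hK hpK (hcan₁ hc0) ht0 h1t.le (by ring)
      have hkey : w = t • p + (1 - t) • ((1 - t)⁻¹ • (w - q)) := by
        rw [smul_inv_smul₀ hne, hq]
        abel
      rwa [← hkey] at hmem
  -- upper bound: infDist q (frontier K) ≤ (6/5) δ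
  set R := Metric.infDist q (frontier K) with hRdef
  have hclaim : ∀ r : ℝ, 0 ≤ r → r < R → 5 / 6 * r ≤ δ := by
    intro r hr0 hrR
    have hball : Metric.closedBall q r ⊆ K := aux_subset_of_infDist hKcl hr0 hqK hrR
    have hxball : Metric.closedBall x (5 / 6 * r) ⊆ K := by
      intro w hw
      have hw' : ‖w - x‖ ≤ 5 / 6 * r := by
        rwa [Metric.mem_closedBall, dist_eq_norm] at hw
      have hA : q + (6 / 5 : ℝ) • (w - x) ∈ Metric.closedBall q r := by
        rw [Metric.mem_closedBall, dist_eq_norm]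
        have : q + (6 / 5 : ℝ) • (w - x) - q = (6 / 5 : ℝ) • (w - x) := by abel
        rw [this, norm_smul, Real.norm_eq_abs]
        rw [abs_of_pos (by norm_num : (0:ℝ) < 6/5)]
        linarith
      have hmem := hK (hball hA) hxmy (by norm_num : (0:ℝ) ≤ 5/6)
        (by norm_num : (0:ℝ) ≤ 1/6) (by norm_num)
      have hkey : w = (5 / 6 : ℝ) • (q + (6 / 5 : ℝ) • (w - x)) + (1 / 6 : ℝ) • (x - y) := by
        rw [hqdef]; module
      rwa [← hkey] at hmem
    have := aux_ball_le_infDist hfr hxball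
    rwa [hδ] at this
  have hup : 5 / 6 * R ≤ δ := by
    by_contra hcon
    push_neg at hcon
    have hR0 : 0 < R := by linarith
    set r := (6 / 5 * δ + R) / 2 with hrdef
    have hr0 : 0 ≤ r := by rw [hrdef]; linarith
    have hrR : r < R := by rw [hrdef]; linarith
    have := hclaim r hr0 hrR
    rw [hrdef] at this
    linarith
  -- support height bound
  obtain ⟨h, hhdef⟩ : ∃ h : ℝ, h = ⟪v, p⟫ - ⟪v, x⟫ := ⟨_, rfl⟩
  have hyb : ∀ z ∈ K, ⟪v, z⟫ - ⟪v, x⟫ ≤ h := fun z hz => hhdef ▸ sub_le_sub_right (hsupp z hz) _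
  have hy1 : ⟪v, y⟫ ≤ h := by
    have := hyb _ hxpy
    rw [inner_add_right] at this
    linarith
  have hp12 : ⟪v, p⟫ ≤ 1 / 2 := by
    have hpn : ‖p‖ ≤ 1 / 2 := by
      have := hcan₂ hpK
      rwa [Metric.mem_closedBall, dist_zero_right] at this
    calc ⟪v, p⟫ ≤ ‖v‖ * ‖p‖ := real_inner_le_norm v p
      _ = ‖p‖ := by rw [hv1, one_mul]
      _ ≤ 1 / 2 := hpn
  have hdec : h = (1 - t) * ⟪v, p⟫ + 1 / 5 * ⟪v, y⟫ := by
    have h5 : ⟪v, t • p⟫ = ⟪v, x⟫ + 1 / 5 * ⟪v, y⟫ := by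
      rw [hq, hqdef, inner_add_right, real_inner_smul_right]
    rw [real_inner_smul_right] at h5
    rw [hhdef]
    linarith
  have hhb : 2 * γ * h ≤ 3 * δ := by
    have e1 : (1 - t) * ⟪v, p⟫ ≤ (1 - t) * (1 / 2) :=
      mul_le_mul_of_nonneg_left hp12 (by linarith)
    have e2 : h ≤ (1 - t) / 2 + 1 / 5 * h := by rw [hdec]; linarith
    have e3 : (1 - t) * γ ≤ 12 / 5 * δ := by linarith [hlow, hup]
    have e4 : h ≤ 5 / 8 * (1 - t) := by linarith
    have e5 : γ * h ≤ γ * (5 / 8 * (1 - t)) := mul_le_mul_of_nonneg_left e4 hγ0.le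
    linarith [e5, e3]
  -- conclude
  apply Real.sSup_le
  · rintro r ⟨a, ⟨y1, hy1a, hy1b, rfl⟩, b, ⟨y2, hy2a, hy2b, rfl⟩, rfl⟩
    have hA : ⟪v, y1⟫ ≤ h := by
      have := hyb _ hy1a
      rw [inner_add_right] at this
      linarith
    have hB : -⟪v, y2⟫ ≤ h := by
      have := hyb _ hy2b
      rw [inner_sub_right] at this
      linarith
    have hcalc : ⟪v, (x + (4 / γ) • y1) - (x + (4 / γ) • y2)⟫
        = 4 / γ * (⟪v, y1⟫ - ⟪v, y2⟫) := by
      rw [show (x + (4 / γ) • y1) - (x + (4 / γ) • y2) = (4 / γ) • (y1 - y2) by module]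
      rw [real_inner_smul_right, inner_sub_right]
    rw [hcalc, div_mul_eq_mul_div, div_mul_eq_mul_div,
      div_le_div_iff₀ hγ0 (by positivity : (0:ℝ) < 3 * γ ^ 2)]
    obtain ⟨A, hAdef⟩ : ∃ A : ℝ, A = ⟪v, y1⟫ := ⟨_, rfl⟩
    obtain ⟨B, hBdef⟩ : ∃ B : ℝ, B = ⟪v, y2⟫ := ⟨_, rfl⟩
    rw [← hAdef, ← hBdef]
    rw [← hAdef] at hA
    rw [← hBdef] at hB
    have f1 : γ ^ 2 * (A - B) ≤ γ ^ 2 * (2 * h) :=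
      mul_le_mul_of_nonneg_left (by linarith) (sq_nonneg γ)
    have f2 : γ * (2 * γ * h) ≤ γ * (3 * δ) := mul_le_mul_of_nonneg_left hhb hγ0.le
    nlinarith [f1, f2, mul_nonneg hγ0.le hδnn]
  · positivity
end

section
/- Let 0 < γ ≤ 1 and let K ⊂ ℝ^d be a convex body in γ-canonical form. Let y ∈ K with y ≠ O, and let p be the intersection point of ∂K with the ray emanating from O through y. Then p ∈ M^{1/γ}(y). -/
open Set Metric

section Convex

variable {𝕜 E : Type*} [Field 𝕜] [LinearOrder 𝕜] [IsStrictOrderedRing 𝕜]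
  [AddCommGroup E] [Module 𝕜 E]

theorem Convex.smul_mem_of_mem_Icc {K : Set E} (hK : Convex 𝕜 K) {p : E} {c s : 𝕜}
    (hp : p ∈ K) (hcp : -c • p ∈ K) (hs : s ∈ Icc (-c) 1) : s • p ∈ K := by
  have hline : Convex 𝕜 ((· • p) ⁻¹' K : Set 𝕜) :=
    hK.linear_preimage (LinearMap.toSpanSingleton 𝕜 E p)
  exact hline.ordConnected.out hcp (by simpa using hp) hs

variable [TopologicalSpace E] [IsTopologicalAddGroup E] [ContinuousConstSMul 𝕜 E]

theorem Convex.one_le_of_smul_notMem_interior {K : Set E} (hK : Convex 𝕜 K)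
    (h0 : (0 : E) ∈ interior K) {y : E} (hy : y ∈ K) {t : 𝕜} (ht : 0 ≤ t)
    (hty : t • y ∉ interior K) : 1 ≤ t := by
  by_contra! ht1
  apply hty
  simpa using hK.combo_interior_self_mem_interior h0 hy (sub_pos.2 ht1) ht (sub_add_cancel 1 t)

end Convex

theorem mem_Mreg_one_div {d : ℕ} {K : Set (EuclideanSpace ℝ (Fin d))}
    {y p : EuclideanSpace ℝ (Fin d)} {γ : ℝ} (hγ : γ ≠ 0)
    (hadd : y + γ • (p - y) ∈ K) (hsub : y - γ • (p - y) ∈ K) : p ∈ Mreg K y (1 / γ) :=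
  ⟨γ • (p - y), hadd, hsub, by rw [smul_smul, one_div_mul_cancel hγ, one_smul, add_sub_cancel]⟩

theorem stmt12_general {d : ℕ} (γ : ℝ) (hγ0 : 0 < γ) (hγ1 : γ ≤ 1)
    (K : Set (EuclideanSpace ℝ (Fin d)))
    (hK : Convex ℝ K) (hKc : IsCompact K)
    (hcan₁ : Metric.closedBall (0 : EuclideanSpace ℝ (Fin d)) (γ / 2) ⊆ K)
    (hcan₂ : K ⊆ Metric.closedBall (0 : EuclideanSpace ℝ (Fin d)) (1 / 2))
    (y : EuclideanSpace ℝ (Fin d)) (hy : y ∈ K)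
    (p : EuclideanSpace ℝ (Fin d)) (hp : p ∈ frontier K)
    (hray : ∃ t : ℝ, 0 ≤ t ∧ p = t • y) :
    p ∈ Mreg K y (1 / γ) := by
  obtain ⟨t, ht0, rfl⟩ := hray
  have hpK : t • y ∈ K := hKc.isClosed.frontier_subset hp
  have h0 : (0 : EuclideanSpace ℝ (Fin d)) ∈ interior K :=
    mem_interior.2 ⟨ball 0 (γ / 2), ball_subset_closedBall.trans hcan₁, isOpen_ball,
      mem_ball_self (half_pos hγ0)⟩
  have ht1 : 1 ≤ t := hK.one_le_of_smul_notMem_interior h0 hy ht0 hp.2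
  have hneg : -γ • t • y ∈ K := hcan₁ <| by
    have hnorm := mem_closedBall_zero_iff.1 (hcan₂ hpK)
    rw [mem_closedBall_zero_iff, norm_smul, Real.norm_eq_abs, abs_neg, abs_of_pos hγ0]
    nlinarith
  refine mem_Mreg_one_div hγ0.ne' ?_ ?_
  · convert hK hy hpK (sub_nonneg.2 hγ1) hγ0.le (sub_add_cancel 1 γ) using 1
    module
  · have hs : (1 + γ) / t - γ ∈ Icc (-γ) 1 := by
      have hnonneg : 0 ≤ (1 + γ) / t := by positivity
      have hle : (1 + γ) / t ≤ 1 + γ := div_le_self (by linarith) ht1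
      constructor <;> linarith
    convert hK.smul_mem_of_mem_Icc hpK hneg hs using 1
    rw [smul_smul, sub_mul, div_mul_cancel₀ _ (by linarith : t ≠ 0)]
    module

/-- Let `0 < γ ≤ 1` and let `K ⊆ ℝ^d` be a convex body in γ-canonical
form. Let `y ∈ K` with `y ≠ O`, and let `p` be the intersection point of `∂K` with the
ray emanating from `O` through `y`. Then `p ∈ M^{1/γ}(y)`. -/
theorem stmt12 {d : ℕ} (γ : ℝ) (hγ0 : 0 < γ) (hγ1 : γ ≤ 1)
    (K : Set (EuclideanSpace ℝ (Fin d)))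
    (hK : Convex ℝ K) (hKc : IsCompact K) (hKi : (interior K).Nonempty)
    (hcan₁ : Metric.closedBall (0 : EuclideanSpace ℝ (Fin d)) (γ / 2) ⊆ K)
    (hcan₂ : K ⊆ Metric.closedBall (0 : EuclideanSpace ℝ (Fin d)) (1 / 2))
    (y : EuclideanSpace ℝ (Fin d)) (hy : y ∈ K) (hy0 : y ≠ 0)
    (p : EuclideanSpace ℝ (Fin d)) (hp : p ∈ frontier K)
    (hray : ∃ t : ℝ, 0 ≤ t ∧ p = t • y) :
    p ∈ Mreg K y (1 / γ) :=
  stmt12_general γ hγ0 hγ1 K hK hKc hcan₁ hcan₂ y hy p hp hray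
end
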